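/- arXiv:math/9812028 — 2 statements merged into one kernel-verified Lean document; each statement's English description precedes it below -/
import Mathlib

section
/- Narrowness is a quasi-isometry invariant of finitely generated groups: if G and G' are finitely generated groups with word metrics, φ : G → G' is a quasi-isometry, and G' is narrow, then G is narrow. -/
/-- A finite symmetric generating set for a group, inducing the word metric. -/
structure GenSet (G : Type*) [Group G] where
  carrier : Finset G
  symm : ∀ a ∈ carrier, a⁻¹ ∈ carrier
  gen : Subgroup.closure (carrier : Set G) = ⊤

namespace GenSet

variable {G : Type*} [Group G] (S : GenSet G)

/-- Adjacency in the Cayley graph. -/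
def adj (g h : G) : Prop := g⁻¹ * h ∈ S.carrier

/-- The word metric: the least length of a word in the generators carrying `g` to `h`. -/
noncomputable def dist (g h : G) : ℕ :=
  sInf {n | ∃ w : List G, (∀ a ∈ w, a ∈ S.carrier) ∧ w.length = n ∧ g * w.prod = h}

/-- The ball of radius `r` about `c` in the word metric. -/
def ball (c : G) (r : ℕ) : Set G := {g | S.dist c g ≤ r}

/-- `C` separates `A` from `B` if every path (finite sequence of points, each at distance
one from its successor) from `A` to `B` meets `C`. -/
def Separates (C A B : Set G) : Prop :=
  ∀ (l : List G) (hl : l ≠ []), l.Chain' S.adj → l.head hl ∈ A → l.getLast hl ∈ B →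
    ∃ x ∈ l, x ∈ C

/-- A group is narrow if there is an integer `i` such that every ball is separated from all
but finitely many balls of the same radius by a set of size at most `i`. -/
def Narrow : Prop :=
  ∃ i : ℕ, ∀ (r : ℕ) (c : G),
    {c' : G | ¬ ∃ C : Finset G, C.card ≤ i ∧
      S.Separates (↑C) (S.ball c r) (S.ball c' r)}.Finite

/-- Two points are connected within `A` if some path inside `A` joins them. -/
def ConnIn (A : Set G) (g h : G) : Prop :=
  ∃ (l : List G) (hl : l ≠ []), l.Chain' S.adj ∧ (∀ x ∈ l, x ∈ A) ∧
    l.head hl = g ∧ l.getLast hl = h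

/-- The connected component of `g` inside the set `A`. -/
def comp (A : Set G) (g : G) : Set G := {h | S.ConnIn A g h}

/-- A group is one-ended if for every radius `r` the complement of the ball of radius `r`
about the identity has exactly one infinite connected component. -/
def OneEnded : Prop :=
  ∀ r : ℕ, ∃ g ∈ (S.ball 1 r)ᶜ, (S.comp (S.ball 1 r)ᶜ g).Infinite ∧
    ∀ h ∈ (S.ball 1 r)ᶜ, (S.comp (S.ball 1 r)ᶜ h).Infinite →
      S.comp (S.ball 1 r)ᶜ h = S.comp (S.ball 1 r)ᶜ g

end GenSet

/-- A group is virtually free if it has a free subgroup of finite index. -/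
def VirtuallyFree (G : Type*) [Group G] : Prop :=
  ∃ H : Subgroup G, H.FiniteIndex ∧ IsFreeGroup H

/-- A group is virtually cyclic if it has a cyclic subgroup of finite index. -/
def VirtuallyCyclic (G : Type*) [Group G] : Prop :=
  ∃ H : Subgroup G, H.FiniteIndex ∧ IsCyclic H

/-- A (finitely generable) group is one-ended if it is so with respect to some
(equivalently, any) word metric. -/
def OneEndedGroup (G : Type*) [Group G] : Prop := ∃ S : GenSet G, S.OneEnded


namespace GenSet

variable {G : Type*} [Group G] (S : GenSet G)

-- new material
theorem exists_word (g h : G) :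
    ∃ w : List G, (∀ a ∈ w, a ∈ S.carrier) ∧ g * w.prod = h := by
  have hx : g⁻¹ * h ∈ Subgroup.closure (S.carrier : Set G) := by
    rw [S.gen]; trivial
  rw [← Subgroup.mem_toSubmonoid, Subgroup.closure_toSubmonoid] at hx
  obtain ⟨l, hl, hp⟩ := Submonoid.exists_list_of_mem_closure hx
  refine ⟨l, fun a ha => ?_, by rw [hp]; group⟩
  rcases hl a ha with h1 | h1
  · exact h1
  · rw [← inv_inv a]; exact S.symm _ (by simpa using h1)

theorem distSet_nonempty (g h : G) :
    {n | ∃ w : List G, (∀ a ∈ w, a ∈ S.carrier) ∧ w.length = n ∧ g * w.prod = h}.Nonempty := by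
  obtain ⟨w, h1, h2⟩ := S.exists_word g h
  exact ⟨w.length, w, h1, rfl, h2⟩

theorem dist_le_length {g h : G} {w : List G} (h1 : ∀ a ∈ w, a ∈ S.carrier)
    (h2 : g * w.prod = h) : S.dist g h ≤ w.length :=
  Nat.sInf_le ⟨w, h1, rfl, h2⟩

theorem exists_geodesic (g h : G) :
    ∃ w : List G, (∀ a ∈ w, a ∈ S.carrier) ∧ w.length = S.dist g h ∧ g * w.prod = h :=
  Nat.sInf_mem (S.distSet_nonempty g h)

@[simp] theorem dist_self (g : G) : S.dist g g = 0 :=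
  Nat.le_zero.mp (S.dist_le_length (w := []) (by simp) (by simp))

theorem eq_of_dist_eq_zero {g h : G} (hd : S.dist g h = 0) : g = h := by
  obtain ⟨w, _, hlen, hp⟩ := S.exists_geodesic g h
  rw [hd, List.length_eq_zero_iff] at hlen
  simpa [hlen] using hp

theorem dist_triangle (g h i : G) : S.dist g i ≤ S.dist g h + S.dist h i := by
  obtain ⟨w1, hw1, hl1, hp1⟩ := S.exists_geodesic g h
  obtain ⟨w2, hw2, hl2, hp2⟩ := S.exists_geodesic h i
  calc S.dist g i ≤ (w1 ++ w2).length := S.dist_le_length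
        (fun a ha => by rcases List.mem_append.mp ha with h | h; exacts [hw1 a h, hw2 a h])
        (by rw [List.prod_append, ← mul_assoc, hp1, hp2])
    _ = _ := by simp [hl1, hl2]

theorem dist_symm (g h : G) : S.dist g h = S.dist h g := by
  have key : ∀ a b : G, S.dist a b ≤ S.dist b a := by
    intro a b
    obtain ⟨w, hw, hlen, hp⟩ := S.exists_geodesic b a
    have : a * ((w.map fun x => x⁻¹).reverse).prod = b := by
      rw [← List.prod_inv_reverse, ← hp]; group
    calc S.dist a b ≤ ((w.map fun x => x⁻¹).reverse).length := S.dist_le_length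
          (fun x hx => by
            simp only [List.mem_reverse, List.mem_map] at hx
            obtain ⟨y, hy, rfl⟩ := hx
            exact S.symm _ (hw y hy)) this
      _ = S.dist b a := by simp [hlen]
  exact le_antisymm (key g h) (key h g)

theorem dist_le_one_of_adj {g h : G} (hadj : S.adj g h) : S.dist g h ≤ 1 :=
  S.dist_le_length (w := [g⁻¹ * h]) (by simpa using show g⁻¹ * h ∈ S.carrier from hadj) (by simp)

theorem dist_mul_left (a g h : G) : S.dist (a * g) (a * h) = S.dist g h := by
  unfold dist
  congr 1
  ext n
  constructor
  · rintro ⟨w, h1, h2, h3⟩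
    exact ⟨w, h1, h2, by rw [mul_assoc] at h3; exact mul_left_cancel h3⟩
  · rintro ⟨w, h1, h2, h3⟩
    exact ⟨w, h1, h2, by rw [mul_assoc, h3]⟩

theorem ball_finite (c : G) (r : ℕ) : (S.ball c r).Finite := by
  induction r generalizing c with
  | zero =>
      refine Set.Finite.subset (Set.finite_singleton c) ?_
      intro g hg
      exact (S.eq_of_dist_eq_zero (Nat.le_zero.mp hg)).symm
  | succ r ih =>
      have : S.ball c (r + 1) ⊆ S.ball c r ∪ ⋃ a ∈ S.carrier, (fun g => g * a) '' S.ball c r := by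
        intro g hg
        obtain ⟨w, hw, hlen, hp⟩ := S.exists_geodesic c g
        rcases Nat.lt_or_ge w.length (r + 1) with hlt | hge
        · exact Or.inl (le_trans (S.dist_le_length hw hp) (Nat.lt_succ_iff.mp hlt))
        · have hne : w ≠ [] := by
            intro h; subst h; simp at hge
          right
          refine Set.mem_biUnion (hw _ (List.getLast_mem hne)) ?_
          refine ⟨c * w.dropLast.prod, ?_, ?_⟩
          · have : S.dist c (c * w.dropLast.prod) ≤ w.dropLast.length :=
              S.dist_le_length (fun a ha => hw a (List.dropLast_subset w ha)) rfl
            have hlen' : w.length = r + 1 := le_antisymm (hlen ▸ hg) hge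
            refine le_trans this ?_
            rw [List.length_dropLast]
            omega
          · show c * w.dropLast.prod * w.getLast hne = g
            rw [← hp]
            conv_rhs => rw [← List.dropLast_append_getLast hne]
            rw [List.prod_append, List.prod_cons, List.prod_nil, mul_one, mul_assoc]
      refine Set.Finite.subset ?_ this
      refine (ih c).union (Set.Finite.biUnion S.carrier.finite_toSet fun a _ => ?_)
      exact (ih c).image _

theorem ncard_ball (c : G) (r : ℕ) : (S.ball c r).ncard = (S.ball 1 r).ncard := by
  have : S.ball c r = (fun g => c * g) '' S.ball 1 r := by
    ext g
    simp only [Set.mem_image, ball, Set.mem_setOf_eq]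
    constructor
    · intro hg
      exact ⟨c⁻¹ * g, by rw [show S.dist 1 (c⁻¹ * g) = S.dist c g from by
        rw [← S.dist_mul_left c 1 (c⁻¹ * g)]; group]; exact hg, by group⟩
    · rintro ⟨x, hx, rfl⟩
      rwa [show S.dist c (c * x) = S.dist 1 x from by rw [← S.dist_mul_left c 1 x, mul_one]]
  rw [this, Set.ncard_image_of_injective _ (mul_right_injective c)]

end GenSet

namespace GenSet

variable {G G' : Type*} [Group G] [Group G'] {S : GenSet G} (S' : GenSet G')

/-- A choice of geodesic word. -/
noncomputable def geo (a b : G') : List G' := (S'.exists_geodesic a b).choose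

theorem geo_mem {a b : G'} : ∀ x ∈ S'.geo a b, x ∈ S'.carrier :=
  (S'.exists_geodesic a b).choose_spec.1

theorem geo_length (a b : G') : (S'.geo a b).length = S'.dist a b :=
  (S'.exists_geodesic a b).choose_spec.2.1

theorem geo_prod (a b : G') : a * (S'.geo a b).prod = b :=
  (S'.exists_geodesic a b).choose_spec.2.2

/-- The path from `a` up to (but excluding) `b` along a geodesic. -/
noncomputable def seg (a b : G') : List G' :=
  (List.range (S'.geo a b).length).map fun i => a * ((S'.geo a b).take i).prod

theorem seg_eq_nil_imp {a b : G'} (h : S'.seg a b = []) : a = b := by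
  unfold seg at h
  rw [List.map_eq_nil_iff, List.range_eq_nil] at h
  have := S'.geo_prod a b
  rw [List.length_eq_zero_iff.mp h] at this
  simpa using this

theorem seg_getElem {a b : G'} (i : ℕ) (h : i < (S'.seg a b).length) :
    (S'.seg a b)[i] = a * ((S'.geo a b).take i).prod ∧ i < (S'.geo a b).length := by
  unfold seg at h ⊢
  simp only [List.length_map, List.length_range] at h
  simp [h]

theorem seg_length (a b : G') : (S'.seg a b).length = (S'.geo a b).length := by
  unfold seg; simp

theorem seg_head {a b : G'} (h : S'.seg a b ≠ []) : (S'.seg a b).head? = some a := by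
  have hlen : 0 < (S'.seg a b).length := List.length_pos_iff.mpr h
  rw [List.head?_eq_getElem?, List.getElem?_eq_getElem hlen]
  simp [(S'.seg_getElem 0 hlen).1]

theorem mem_seg {a b : G'} {z : G'} (hz : z ∈ S'.seg a b) : S'.dist a z ≤ S'.dist a b := by
  obtain ⟨i, hi, rfl⟩ := List.getElem_of_mem hz
  obtain ⟨he, hi'⟩ := S'.seg_getElem i hi
  rw [he]
  calc S'.dist a (a * ((S'.geo a b).take i).prod) ≤ ((S'.geo a b).take i).length :=
        S'.dist_le_length (fun x hx => S'.geo_mem x (List.mem_of_mem_take hx)) rfl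
    _ ≤ (S'.geo a b).length := by simp
    _ = S'.dist a b := S'.geo_length a b

theorem seg_chain'_append {a b : G'} {l' : List G'} (hb : l'.head? = some b)
    (hl' : l'.Chain' S'.adj) : (S'.seg a b ++ l').Chain' S'.adj := by
  simp only [List.Chain', List.isChain_append]
  refine ⟨?_, hl', ?_⟩
  · rw [List.isChain_iff_getElem]
    intro i hi
    have h1 : i < (S'.seg a b).length := by omega
    have h2 : i + 1 < (S'.seg a b).length := by omega
    obtain ⟨e1, hi1⟩ := S'.seg_getElem i h1
    obtain ⟨e2, hi2⟩ := S'.seg_getElem (i + 1) h2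
    rw [e1, e2]
    show _ ∈ S'.carrier
    have : ((S'.geo a b).take (i + 1)).prod = ((S'.geo a b).take i).prod * (S'.geo a b).get ⟨i, hi1⟩ :=
      List.prod_take_succ _ i hi1
    rw [show (a * ((S'.geo a b).take i).prod)⁻¹ * (a * ((S'.geo a b).take (i+1)).prod)
        = ((S'.geo a b).take i).prod⁻¹ * ((S'.geo a b).take (i+1)).prod from by group, this]
    simpa using S'.geo_mem _ (List.get_mem (S'.geo a b) ⟨i, hi1⟩)
  · intro x hx y hy
    rw [hb, Option.mem_some_iff] at hy
    subst hy
    have hne : S'.seg a b ≠ [] := by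
      intro h; rw [h] at hx; simp at hx
    have hlen : 0 < (S'.seg a b).length := List.length_pos_iff.mpr hne
    rw [List.getLast?_eq_getElem?, List.getElem?_eq_getElem (Nat.sub_lt hlen Nat.one_pos), Option.mem_some_iff] at hx
    subst hx
    obtain ⟨e1, hi1⟩ := S'.seg_getElem (a := a) (b := b) ((S'.seg a b).length - 1)
      (Nat.sub_lt hlen Nat.one_pos)
    rw [e1]
    show _ ∈ S'.carrier
    have hn : (S'.seg a b).length - 1 + 1 = (S'.geo a b).length := by
      rw [seg_length] at hlen ⊢; omega
    have hprod : (S'.geo a b).prod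
        = ((S'.geo a b).take ((S'.seg a b).length - 1)).prod * (S'.geo a b).get ⟨(S'.seg a b).length - 1, hi1⟩ := by
      conv_lhs => rw [← List.take_length (l := S'.geo a b), ← hn]
      exact List.prod_take_succ _ _ hi1
    rw [show (a * ((S'.geo a b).take ((S'.seg a b).length - 1)).prod)⁻¹ * b
        = ((S'.geo a b).take ((S'.seg a b).length - 1)).prod⁻¹ * (a⁻¹ * b) from by group,
      show a⁻¹ * b = (S'.geo a b).prod from by rw [inv_mul_eq_iff_eq_mul]; exact (S'.geo_prod a b).symm, hprod]
    simpa using S'.geo_mem _ (List.get_mem (S'.geo a b) ⟨(S'.seg a b).length - 1, hi1⟩)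

variable (φ : G → G')

/-- Fill in a path in `G` to a path in `G'` between the `φ`-images of its points. -/
noncomputable def fill : List G → List G'
  | [] => []
  | [x] => [φ x]
  | x :: y :: t => S'.seg (φ x) (φ y) ++ fill (y :: t)

theorem fill_ne_nil : ∀ {l : List G}, l ≠ [] → fill S' φ l ≠ []
  | [], h => absurd rfl h
  | [x], _ => by simp [fill]
  | x :: y :: t, _ => by
      simp only [fill]
      intro h
      rw [List.append_eq_nil_iff] at h
      exact fill_ne_nil (List.cons_ne_nil y t) h.2

theorem fill_head? : ∀ {l : List G} (x : G), l.head? = some x →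
    (fill S' φ l).head? = some (φ x)
  | [], x, h => by simp at h
  | [a], x, h => by
      simp only [List.head?_cons, Option.some_inj] at h
      subst h; simp [fill]
  | a :: b :: t, x, h => by
      simp only [List.head?_cons, Option.some_inj] at h
      subst h
      simp only [fill, List.head?_append]
      rcases eq_or_ne (S'.seg (φ a) (φ b)) [] with hseg | hseg
      · rw [hseg]
        simp only [List.head?_nil, Option.none_or]
        rw [fill_head? b (by simp), ← S'.seg_eq_nil_imp hseg]
      · rw [S'.seg_head hseg]; rfl

theorem fill_getLast? : ∀ {l : List G} (x : G), l.getLast? = some x →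
    (fill S' φ l).getLast? = some (φ x)
  | [], x, h => by simp at h
  | [a], x, h => by
      simp only [List.getLast?_singleton, Option.some_inj] at h
      subst h; simp [fill]
  | a :: b :: t, x, h => by
      rw [List.getLast?_cons_cons] at h
      simp only [fill]
      rw [List.getLast?_append_of_ne_nil _ (fill_ne_nil S' φ (List.cons_ne_nil b t))]
      exact fill_getLast? x h

theorem fill_chain' : ∀ {l : List G}, l.Chain' S.adj → (fill S' φ l).Chain' S'.adj
  | [], _ => by simp [fill, List.Chain']
  | [x], _ => by simp [fill, List.Chain']
  | x :: y :: t, h => by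
      simp only [List.Chain', List.isChain_cons_cons] at h
      simp only [fill]
      exact S'.seg_chain'_append (fill_head? S' φ y (by simp)) (fill_chain' h.2)

theorem fill_mem : ∀ {l : List G}, l.Chain' S.adj → ∀ z ∈ fill S' φ l,
    ∃ x ∈ l, ∃ y ∈ l, S.dist x y ≤ 1 ∧ S'.dist (φ x) z ≤ S'.dist (φ x) (φ y)
  | [], _, z, hz => by simp [fill] at hz
  | [x], _, z, hz => by
      simp only [fill, List.mem_singleton] at hz
      subst hz
      exact ⟨x, List.mem_singleton_self x, x, List.mem_singleton_self x,
        le_trans (le_of_eq (S.dist_self x)) (Nat.zero_le 1), le_refl _⟩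
  | x :: y :: t, h, z, hz => by
      simp only [List.Chain', List.isChain_cons_cons] at h
      simp only [fill, List.mem_append] at hz
      rcases hz with hz | hz
      · exact ⟨x, by simp, y, by simp, S.dist_le_one_of_adj h.1, S'.mem_seg hz⟩
      · obtain ⟨a, ha, b, hb, h1, h2⟩ := fill_mem h.2 z hz
        exact ⟨a, List.mem_cons_of_mem _ ha, b, List.mem_cons_of_mem _ hb, h1, h2⟩

end GenSet

theorem ncard_biUnion_le {α β : Type*} (t : Finset α) (f : α → Set β) (m : ℕ)
    (hm : ∀ a ∈ t, (f a).ncard ≤ m) :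
    (⋃ a ∈ t, f a).ncard ≤ t.card * m := by
  classical
  induction t using Finset.induction_on with
  | empty => simp
  | insert a s hnot ih =>
      rw [Finset.set_biUnion_insert]
      calc (f a ∪ ⋃ x ∈ s, f x).ncard ≤ (f a).ncard + (⋃ x ∈ s, f x).ncard :=
            Set.ncard_union_le _ _
        _ ≤ m + s.card * m := add_le_add (hm a (Finset.mem_insert_self a s))
            (ih fun x hx => hm x (Finset.mem_insert_of_mem hx))
        _ = (insert a s).card * m := by
            rw [Finset.card_insert_of_notMem hnot, add_mul, one_mul, Nat.add_comm]


/-- Narrowness is a quasi-isometry invariant of finitely generated groups: if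
`φ : G → G'` is a quasi-isometry with respect to word metrics and `G'` is narrow,
then `G` is narrow. -/
theorem narrow_of_quasiIsometry {G G' : Type*} [Group G] [Group G']
    (S : GenSet G) (S' : GenSet G') (φ : G → G')
    (hφ : ∃ k : ℝ, 0 < k ∧
      (∀ x y : G, (1 / k) * (S.dist x y : ℝ) - k ≤ (S'.dist (φ x) (φ y) : ℝ) ∧
        (S'.dist (φ x) (φ y) : ℝ) ≤ k * (S.dist x y : ℝ) + k) ∧
      ∀ x' : G', ∃ x : G, (S'.dist x' (φ x) : ℝ) ≤ k)
    (hN : S'.Narrow) : S.Narrow := by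
    classical
  obtain ⟨k, hk0, hbound, -⟩ := hφ
  obtain ⟨i, hi⟩ := hN
  -- bound for the size of fibers of φ
  set M : ℕ := (S.ball 1 ⌈k * k⌉₊).ncard with hM
  set K : ℕ := ⌈2 * k⌉₊ with hK
  set N : ℕ := (S'.ball 1 K).ncard with hNdef
  -- fibers of φ are finite of cardinality at most M
  have hfib : ∀ z : G', (φ ⁻¹' {z}).Finite ∧ (φ ⁻¹' {z}).ncard ≤ M := by
    intro z
    rcases Set.eq_empty_or_nonempty (φ ⁻¹' {z}) with he | ⟨x, hx⟩
    · rw [he]; simp [Set.ncard_empty]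
    · have hsub : φ ⁻¹' {z} ⊆ S.ball x ⌈k * k⌉₊ := by
        intro y hy
        have hxy : S'.dist (φ x) (φ y) = 0 := by
          rw [Set.mem_preimage, Set.mem_singleton_iff] at hx hy
          rw [hx, hy, S'.dist_self]
        have h1 := (hbound x y).1
        rw [hxy] at h1
        have h2 : (1 / k) * (S.dist x y : ℝ) ≤ k := by push_cast at h1 ⊢; linarith
        have h3 : k * ((1 / k) * (S.dist x y : ℝ)) ≤ k * k :=
          mul_le_mul_of_nonneg_left h2 (le_of_lt hk0)
        rw [← mul_assoc, mul_one_div_cancel (ne_of_gt hk0), one_mul] at h3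
        have h4 : (S.dist x y : ℝ) ≤ (⌈k * k⌉₊ : ℝ) := h3.trans (Nat.le_ceil _)
        exact_mod_cast h4
      constructor
      · exact (S.ball_finite x _).subset hsub
      · calc (φ ⁻¹' {z}).ncard ≤ (S.ball x ⌈k * k⌉₊).ncard :=
              Set.ncard_le_ncard hsub (S.ball_finite x _)
          _ = M := S.ncard_ball x _
  refine ⟨i * N * M, fun r c => ?_⟩
  set R : ℕ := ⌈k * r + k⌉₊ with hR
  have hbad' := hi R (φ c)
  -- the bad set for `c` is contained in the preimage of the bad set for `φ c`
  refine Set.Finite.subset (Set.Finite.biUnion hbad' (fun z _ => (hfib z).1)) ?_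
  intro c' hc'
  simp only [Set.mem_setOf_eq] at hc'
  by_cases hmem : φ c' ∈ {c'' : G' | ¬ ∃ C : Finset G', C.card ≤ i ∧
      S'.Separates (↑C) (S'.ball (φ c) R) (S'.ball c'' R)}
  · exact Set.mem_biUnion hmem rfl
  exfalso
  apply hc'
  rw [Set.mem_setOf_eq, not_not] at hmem
  obtain ⟨C', hC'card, hC'sep⟩ := hmem
  -- thickened separator and its preimage
  set Cthick : Set G' := ⋃ z ∈ (C' : Set G'), S'.ball z K with hCthick
  have hCthickFin : Cthick.Finite :=
    Set.Finite.biUnion C'.finite_toSet fun z _ => S'.ball_finite z K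
  have hCthickCard : Cthick.ncard ≤ i * N := by
    have := ncard_biUnion_le C' (fun z => S'.ball z K) N
      (fun z _ => le_of_eq (S'.ncard_ball z K))
    exact le_trans this (Nat.mul_le_mul_right N hC'card)
  set Cset : Set G := φ ⁻¹' Cthick with hCset
  have hCsetEq : Cset = ⋃ z ∈ hCthickFin.toFinset, φ ⁻¹' {z} := by
    ext x
    simp [hCset, Set.mem_preimage]
  have hCsetFin : Cset.Finite := by
    rw [hCsetEq]
    exact Set.Finite.biUnion (Finset.finite_toSet _) fun z _ => (hfib z).1
  have hCsetCard : Cset.ncard ≤ i * N * M := by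
    rw [hCsetEq]
    calc (⋃ z ∈ hCthickFin.toFinset, φ ⁻¹' {z}).ncard
        ≤ hCthickFin.toFinset.card * M :=
          ncard_biUnion_le _ _ M (fun z _ => (hfib z).2)
      _ ≤ i * N * M := by
          refine Nat.mul_le_mul_right M ?_
          rw [← Set.ncard_eq_toFinset_card Cthick hCthickFin]
          exact hCthickCard
  -- it separates
  refine ⟨hCsetFin.toFinset, by rw [← Set.ncard_eq_toFinset_card Cset hCsetFin]; exact hCsetCard, ?_⟩
  intro l hl hchain hhead hlast
  -- build the filled path in G'
  set l' : List G' := GenSet.fill S' φ l with hl'def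
  have hl'ne : l' ≠ [] := GenSet.fill_ne_nil S' φ hl
  have hl'chain : l'.Chain' S'.adj := GenSet.fill_chain' (S := S) (S' := S') φ hchain
  have hl'head : l'.head hl'ne = φ (l.head hl) := by
    have h1 := GenSet.fill_head? S' φ (l.head hl) (List.head?_eq_head hl)
    rw [← hl'def, List.head?_eq_head hl'ne] at h1
    exact Option.some_injective _ h1
  have hl'last : l'.getLast hl'ne = φ (l.getLast hl) := by
    have h1 := GenSet.fill_getLast? S' φ (l.getLast hl) (List.getLast?_eq_getLast hl)
    rw [← hl'def, List.getLast?_eq_getLast hl'ne] at h1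
    exact Option.some_injective _ h1
  have hcast : ∀ (n : ℕ) (x : ℝ), (n : ℝ) ≤ x → n ≤ ⌈x⌉₊ := by
    intro n x h
    exact_mod_cast h.trans (Nat.le_ceil x)
  -- heads and tails of l' lie in the appropriate balls
  have hhead' : l'.head hl'ne ∈ S'.ball (φ c) R := by
    rw [hl'head]
    have h2 := (hbound c (l.head hl)).2
    have h3 : (S'.dist (φ c) (φ (l.head hl)) : ℝ) ≤ k * r + k := by
      refine h2.trans ?_
      have : (S.dist c (l.head hl) : ℝ) ≤ r := by exact_mod_cast hhead
      nlinarith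
    exact hcast _ _ h3
  have hlast' : l'.getLast hl'ne ∈ S'.ball (φ c') R := by
    rw [hl'last]
    have h2 := (hbound c' (l.getLast hl)).2
    have h3 : (S'.dist (φ c') (φ (l.getLast hl)) : ℝ) ≤ k * r + k := by
      refine h2.trans ?_
      have : (S.dist c' (l.getLast hl) : ℝ) ≤ r := by exact_mod_cast hlast
      nlinarith
    exact hcast _ _ h3
  obtain ⟨z, hzl', hzC'⟩ := hC'sep l' hl'ne hl'chain hhead' hlast'
  obtain ⟨x, hxl, y, hyl, hxy, hdz⟩ := GenSet.fill_mem (S := S) (S' := S') φ hchain z hzl'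
  refine ⟨x, hxl, ?_⟩
  -- x is in Cset
  rw [Finset.mem_coe, Set.Finite.mem_toFinset]
  show φ x ∈ Cthick
  have hdxy : (S'.dist (φ x) (φ y) : ℝ) ≤ 2 * k := by
    have h2 := (hbound x y).2
    have : (S.dist x y : ℝ) ≤ 1 := by exact_mod_cast hxy
    nlinarith
  have hdz2 : S'.dist z (φ x) ≤ K := by
    rw [← S'.dist_symm]
    refine hcast _ _ ?_
    calc (S'.dist (φ x) z : ℝ) ≤ (S'.dist (φ x) (φ y) : ℝ) := by exact_mod_cast hdz
      _ ≤ 2 * k := hdxy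
  exact Set.mem_biUnion hzC' hdz2
end

section
/- Every non-erasing monoid homomorphism f : Δ* → Σ* between finitely generated free monoids factors as a composition of homomorphisms each of which either maps generators to generators, or maps one generator to a word of length two and fixes all other generators. -/
open FreeMonoid

/-- A homomorphism of free monoids mapping each generator to a generator. -/
def IsLetterToLetter {α β : Type} (f : FreeMonoid α →* FreeMonoid β) : Prop :=
  ∀ a : α, ∃ b : β, f (of a) = of b

/-- A homomorphism of free monoids mapping one generator to a word of length two and all
other generators injectively to (copies of) themselves among the generators. -/
def IsDoubling {α β : Type} (f : FreeMonoid α →* FreeMonoid β) : Prop :=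
  ∃ (a₀ : α) (b₁ b₂ : β), f (of a₀) = of b₁ * of b₂ ∧
    ∃ g : α → β, Function.Injective g ∧ ∀ a : α, a ≠ a₀ → f (of a) = of (g a)

/-- The homomorphisms of free monoids on finite alphabets obtained by composing
letter-to-letter homomorphisms and doublings (through finitely many intermediate free
monoids on finite alphabets). -/
inductive Factorable : ∀ {α β : Type} [Fintype α] [Fintype β],
    (FreeMonoid α →* FreeMonoid β) → Prop
  | letter {α β : Type} [Fintype α] [Fintype β] {f : FreeMonoid α →* FreeMonoid β} :
      IsLetterToLetter f → Factorable f
  | doubling {α β : Type} [Fintype α] [Fintype β] {f : FreeMonoid α →* FreeMonoid β} :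
      IsDoubling f → Factorable f
  | comp {α β γ : Type} [Fintype α] [Fintype β] [Fintype γ]
      {f : FreeMonoid α →* FreeMonoid β} {g : FreeMonoid β →* FreeMonoid γ} :
      Factorable f → Factorable g → Factorable (g.comp f)

/-!
Induct on the excess `∑ a, (|f a| - 1)`. If it is zero, `f` maps letters to letters. Otherwise
some `f a₀ = b w` with `w` nonempty; then `f` factors as the doubling `a₀ ↦ a₀ a₀'` into
`Option α`, whose fresh letter `none` plays `a₀'`, followed by the map sending `a₀ ↦ b`, `a₀' ↦ w` and
agreeing with `f` elsewhere, whose excess is one less.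
-/

variable {α β : Type}

namespace FreeMonoid

section Doubling

variable [DecidableEq α]

def doubleLetter (a₀ : α) : FreeMonoid α →* FreeMonoid (Option α) :=
  lift fun a => if a = a₀ then of (some a₀) * of none else of (some a)

theorem isDoubling_doubleLetter (a₀ : α) : IsDoubling (doubleLetter a₀) :=
  ⟨a₀, some a₀, none, by simp [doubleLetter], some, Option.some_injective α,
    fun a ha => by simp [doubleLetter, ha]⟩

def splitImage (f : FreeMonoid α →* FreeMonoid β) (a₀ : α) (b : β) (w : FreeMonoid β) :
    FreeMonoid (Option α) →* FreeMonoid β :=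
  lift fun x => x.elim w fun a => if a = a₀ then of b else f (of a)

variable {f : FreeMonoid α →* FreeMonoid β} {a₀ : α} {b : β} {w : FreeMonoid β}

theorem splitImage_comp_doubleLetter (h : f (of a₀) = of b * w) :
    (splitImage f a₀ b w).comp (doubleLetter a₀) = f := by
  refine hom_eq fun a => ?_
  by_cases ha : a = a₀
  · subst ha
    simp [splitImage, doubleLetter, h]
  · simp [splitImage, doubleLetter, ha]

theorem splitImage_of_ne_one (hf : ∀ a, f (of a) ≠ 1) (hw : w ≠ 1) (x : Option α) :
    splitImage f a₀ b w (of x) ≠ 1 := by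
  rcases x with _ | a
  · exact hw
  · by_cases ha : a = a₀
    · simp [splitImage, ha, of_ne_one]
    · simpa [splitImage, ha] using hf a

end Doubling

end FreeMonoid

open FreeMonoid

section LengthExcess

variable [Fintype α]

def lengthExcess (f : FreeMonoid α →* FreeMonoid β) : ℕ :=
  ∑ a, ((f (of a)).length - 1)

variable {f : FreeMonoid α →* FreeMonoid β}

theorem isLetterToLetter_of_lengthExcess_eq_zero (hf : ∀ a, f (of a) ≠ 1)
    (h : lengthExcess f = 0) : IsLetterToLetter f := by
  intro a
  have hle : (f (of a)).length ≤ 1 :=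
    Nat.sub_eq_zero_iff_le.mp (Finset.sum_eq_zero_iff.mp h a (Finset.mem_univ a))
  have hpos : (f (of a)).length ≠ 0 := fun h0 => hf a (length_eq_zero.mp h0)
  exact length_eq_one.mp (by omega)

theorem exists_apply_eq_of_mul_of_lengthExcess_ne_zero (h : lengthExcess f ≠ 0) :
    ∃ a₀ b w, f (of a₀) = of b * w ∧ w ≠ 1 := by
  obtain ⟨a₀, -, ha₀⟩ := Finset.exists_ne_zero_of_sum_ne_zero h
  cases hx : f (of a₀) using FreeMonoid.casesOn with
  | one => simp [hx] at ha₀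
  | of_mul b w => exact ⟨a₀, b, w, hx, fun hw => by simp [hx, hw] at ha₀⟩

theorem lengthExcess_splitImage [DecidableEq α] {a₀ : α} {b : β} {w : FreeMonoid β}
    (h : f (of a₀) = of b * w) (hw : w ≠ 1) :
    lengthExcess (splitImage f a₀ b w) + 1 = lengthExcess f := by
  have hterm (a : α) : (f (of a)).length - 1 =
      (splitImage f a₀ b w (of (some a))).length - 1 + if a = a₀ then w.length else 0 := by
    by_cases ha : a = a₀
    · subst ha
      simp [splitImage, h, length_mul, length_of]
    · simp [splitImage, ha]
  have hw' : w.length ≠ 0 := mt length_eq_zero.mp hw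
  simp only [lengthExcess, Fintype.sum_option, hterm, Finset.sum_add_distrib,
    Finset.sum_ite_eq', Finset.mem_univ, if_true]
  simp only [splitImage, lift_eval_of, Option.elim_none]
  omega

end LengthExcess

/-- Every non-erasing homomorphism between free monoids on finite alphabets factors as a
composition of homomorphisms, each of which either maps generators to generators or maps
one generator to a word of length two and fixes all other generators. -/
theorem factorization_of_nonErasing {Δ Sg : Type} [Fintype Δ] [Fintype Sg]
    (f : FreeMonoid Δ →* FreeMonoid Sg) (hf : ∀ d : Δ, f (of d) ≠ 1) :
    Factorable f := by
  induction hn : lengthExcess f generalizing Δ with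
  | zero => exact .letter (isLetterToLetter_of_lengthExcess_eq_zero hf hn)
  | succ n ih =>
    obtain ⟨d₀, b, w, hd₀, hw⟩ :=
      exists_apply_eq_of_mul_of_lengthExcess_ne_zero (f := f) (by omega)
    classical
    rw [← splitImage_comp_doubleLetter hd₀]
    refine .comp (.doubling (isDoubling_doubleLetter d₀)) (ih _ (splitImage_of_ne_one hf hw) ?_)
    have := lengthExcess_splitImage hd₀ hw
    omega
end
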